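/- The epistemic logic program Π₂ consisting of the rules { p | q. ; ⊥ ← not K p. ; p ← K q. ; q ← K p. } has exactly one K15-world view, namely {{p, q}}. -/
import Mathlib


/- # A formalization of Epistemic Logic Programs (ELPs)

Atoms are drawn from an arbitrary type `α`.
An objective literal is an atom `a` or a default-negated atom `not a`.
A body literal is an objective literal, a subjective literal `K a`,
or a negated subjective literal `not K a`.
A rule has a head (a set of atoms, read disjunctively; the empty head is `⊥`,
i.e. the rule is a constraint) and a body (a set of body literals).
A program is a set of rules. -/

inductive OLit (α : Type) : Type where
  | pos : α → OLit α
  | neg : α → OLit α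

inductive BLit (α : Type) : Type where
  | obj : OLit α → BLit α
  | k   : α → BLit α
  | nk  : α → BLit α

structure Rule (α : Type) : Type where
  head : Set α
  body : Set (BLit α)

abbrev Program (α : Type) : Type := Set (Rule α)

variable {α : Type}

def BLit.atom : BLit α → α
  | .obj (.pos a) => a
  | .obj (.neg a) => a
  | .k a => a
  | .nk a => a

def BLit.isObj : BLit α → Prop
  | .obj _ => True
  | _ => False

def Rule.posBody (r : Rule α) : Set α := {a | BLit.obj (OLit.pos a) ∈ r.body}
def Rule.negBody (r : Rule α) : Set α := {a | BLit.obj (OLit.neg a) ∈ r.body}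
def Rule.bodyObjAtoms (r : Rule α) : Set α := r.posBody ∪ r.negBody
def Rule.bodySubjAtoms (r : Rule α) : Set α :=
  {a | BLit.k a ∈ r.body ∨ BLit.nk a ∈ r.body}
def Rule.atoms (r : Rule α) : Set α := r.head ∪ BLit.atom '' r.body
def Rule.Objective (r : Rule α) : Prop := ∀ l ∈ r.body, l.isObj
def Rule.Subjective (r : Rule α) : Prop := ∀ l ∈ r.body, ¬ l.isObj

def Program.atoms (P : Program α) : Set α := ⋃ r ∈ P, Rule.atoms r
def Program.objAtoms (P : Program α) : Set α := ⋃ r ∈ P, (r.head ∪ r.bodyObjAtoms)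
def Program.Objective (P : Program α) : Prop := ∀ r ∈ P, r.Objective

/-- `W ⊨ K a` : `a` belongs to every member of `W`. -/
def KSat (W : Set (Set α)) (a : α) : Prop := ∀ I ∈ W, a ∈ I

def satOLit (I : Set α) : OLit α → Prop
  | .pos a => a ∈ I
  | .neg a => a ∉ I

def satBLit (W : Set (Set α)) (I : Set α) : BLit α → Prop
  | .obj l => satOLit I l
  | .k a => KSat W a
  | .nk a => ¬ KSat W a

/-- A positive rule, given as (head, positive body), is classically satisfied by `J`. -/
def ModelsPosRule (J : Set α) (hb : Set α × Set α) : Prop :=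
  hb.2 ⊆ J → (hb.1 ∩ J).Nonempty

/-- The Gelfond–Lifschitz reduct `P^I` of an (objective) program:
remove every rule whose body contains some `not a` with `a ∈ I`,
and delete all negative literals from the remaining rules;
the reduct is represented as a set of positive rules (head, positive body). -/
def GLReduct (P : Program α) (I : Set α) : Set (Set α × Set α) :=
  {hb | ∃ r ∈ P, (∀ a ∈ r.negBody, a ∉ I) ∧ hb = (r.head, r.posBody)}

def ModelsReduct (J : Set α) (R : Set (Set α × Set α)) : Prop :=
  ∀ hb ∈ R, ModelsPosRule J hb

/-- `I` is an answer set (stable model) of `P` iff `I` is a minimal model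
(w.r.t. `⊆`) of the Gelfond–Lifschitz reduct `P^I`. -/
def StableModel (P : Program α) (I : Set α) : Prop :=
  ModelsReduct I (GLReduct P I) ∧ ∀ J ⊆ I, ModelsReduct J (GLReduct P I) → J = I

/-- Body of a rule after taking the K15-reduct w.r.t. `W`:
objective literals are kept; `K a` (in a kept rule, i.e. with `W ⊨ K a`)
is replaced by `a`; in `not K a`, the inner `K a` is replaced by `⊥`
(so the literal becomes `⊤` and disappears) when `W ⊭ K a`,
and by `a` (so the literal becomes `not a`) when `W ⊨ K a`. -/
def K15ReductBody (W : Set (Set α)) (b : Set (BLit α)) : Set (BLit α) :=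
  {l | (∃ ol, BLit.obj ol ∈ b ∧ l = BLit.obj ol)
     ∨ (∃ a, BLit.k a ∈ b ∧ l = BLit.obj (OLit.pos a))
     ∨ (∃ a, BLit.nk a ∈ b ∧ KSat W a ∧ l = BLit.obj (OLit.neg a))}

/-- The K15-reduct of `P` w.r.t. `W`: every subjective literal `K a` with
`W ⊭ K a` is replaced by `⊥` (hence a rule with such a literal positively in
its body can never fire and is removed), and all remaining occurrences of
`K a` are replaced by `a`. -/
def K15Reduct (P : Program α) (W : Set (Set α)) : Program α :=
  {r' | ∃ r ∈ P, (∀ a, BLit.k a ∈ r.body → KSat W a) ∧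
        r'.head = r.head ∧ r'.body = K15ReductBody W r.body}

/-- A non-empty `W` is a K15-world view of `P` iff `W` equals the set of all
stable models of the K15-reduct of `P` w.r.t. `W`. -/
def K15WorldView (P : Program α) (W : Set (Set α)) : Prop :=
  W.Nonempty ∧ W = {I | StableModel (K15Reduct P W) I}

/-- Epistemic stratification (Cabalar et al., Def. 6). -/
def EpistemicallyStratified (P : Program α) : Prop :=
  ∃ lam : α → ℤ,
    (∀ r ∈ P, ∀ a ∈ Rule.atoms r \ Rule.bodySubjAtoms r,
        ∀ b ∈ Rule.atoms r \ Rule.bodySubjAtoms r, lam a = lam b) ∧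
    (∀ r ∈ P, ∀ a ∈ r.head ∪ r.bodyObjAtoms, ∀ b ∈ Rule.bodySubjAtoms r, lam b < lam a)

inductive At : Type where
  | p | q

/-- The ELP Π₂ = { p | q. ; ⊥ ← not K p. ; p ← K q. ; q ← K p. } -/
def Pi2 : Program At :=
  { ⟨{At.p, At.q}, ∅⟩,
    ⟨∅, {BLit.nk At.p}⟩,
    ⟨{At.p}, {BLit.k At.q}⟩,
    ⟨{At.q}, {BLit.k At.p}⟩ }

lemma mem_red_pos (W : Set (Set At)) (b : Set (BLit At)) (a : At) :
    BLit.obj (OLit.pos a) ∈ K15ReductBody W b ↔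
      BLit.obj (OLit.pos a) ∈ b ∨ BLit.k a ∈ b := by
  simp [K15ReductBody, eq_comm]

lemma mem_red_neg (W : Set (Set At)) (b : Set (BLit At)) (a : At) :
    BLit.obj (OLit.neg a) ∈ K15ReductBody W b ↔
      BLit.obj (OLit.neg a) ∈ b ∨ (BLit.nk a ∈ b ∧ KSat W a) := by
  simp [K15ReductBody, eq_comm]

lemma glmem (W : Set (Set At)) (I : Set At) (hb : Set At × Set At) :
    hb ∈ GLReduct (K15Reduct Pi2 W) I ↔
      hb = ({At.p, At.q}, ∅) ∨
      ((KSat W At.p → At.p ∉ I) ∧ hb = (∅, ∅)) ∨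
      (KSat W At.q ∧ hb = ({At.p}, {At.q})) ∨
      (KSat W At.p ∧ hb = ({At.q}, {At.p})) := by
  constructor
  · rintro ⟨r', ⟨r, hr, hK, hh, hbody⟩, hneg, rfl⟩
    simp only [Pi2, Set.mem_insert_iff, Set.mem_singleton_iff] at hr
    rcases hr with rfl | rfl | rfl | rfl
    · left
      have hpos : Rule.posBody r' = (∅ : Set At) := by
        ext a; simp [Rule.posBody, hbody, mem_red_pos]
      rw [hpos, hh]
    · right; left
      have hpos : Rule.posBody r' = (∅ : Set At) := by
        ext a; simp [Rule.posBody, hbody, mem_red_pos]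
      refine ⟨fun hk => ?_, by rw [hpos, hh]⟩
      apply hneg At.p
      simp [Rule.negBody, hbody, mem_red_neg, hk]
    · right; right; left
      have hpos : Rule.posBody r' = ({At.q} : Set At) := by
        ext a; simp [Rule.posBody, hbody, mem_red_pos]
      exact ⟨hK At.q (by simp), by rw [hpos, hh]⟩
    · right; right; right
      have hpos : Rule.posBody r' = ({At.p} : Set At) := by
        ext a; simp [Rule.posBody, hbody, mem_red_pos]
      exact ⟨hK At.p (by simp), by rw [hpos, hh]⟩
  · rintro (rfl | ⟨hc, rfl⟩ | ⟨hq, rfl⟩ | ⟨hp, rfl⟩)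
    · refine ⟨⟨{At.p, At.q}, K15ReductBody W ∅⟩,
        ⟨⟨{At.p, At.q}, ∅⟩, by simp [Pi2], by simp, rfl, rfl⟩, ?_, ?_⟩
      · intro a ha; simp [Rule.negBody, mem_red_neg] at ha
      · have : Rule.posBody (⟨{At.p, At.q}, K15ReductBody W ∅⟩ : Rule At) = (∅ : Set At) := by
          ext a; simp [Rule.posBody, mem_red_pos]
        rw [this]
    · refine ⟨⟨∅, K15ReductBody W {BLit.nk At.p}⟩,
        ⟨⟨∅, {BLit.nk At.p}⟩, by simp [Pi2], by simp, rfl, rfl⟩, ?_, ?_⟩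
      · intro a ha
        simp [Rule.negBody, mem_red_neg] at ha
        rcases ha with ⟨rfl, hk⟩
        exact hc hk
      · have : Rule.posBody (⟨∅, K15ReductBody W {BLit.nk At.p}⟩ : Rule At) = (∅ : Set At) := by
          ext a; simp [Rule.posBody, mem_red_pos]
        rw [this]
    · refine ⟨⟨{At.p}, K15ReductBody W {BLit.k At.q}⟩,
        ⟨⟨{At.p}, {BLit.k At.q}⟩, by simp [Pi2], ?_, rfl, rfl⟩, ?_, ?_⟩
      · intro a ha; simp at ha; subst ha; exact hq
      · intro a ha; simp [Rule.negBody, mem_red_neg] at ha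
      · have : Rule.posBody (⟨{At.p}, K15ReductBody W {BLit.k At.q}⟩ : Rule At) = ({At.q} : Set At) := by
          ext a; simp [Rule.posBody, mem_red_pos]
        rw [this]
    · refine ⟨⟨{At.q}, K15ReductBody W {BLit.k At.p}⟩,
        ⟨⟨{At.q}, {BLit.k At.p}⟩, by simp [Pi2], ?_, rfl, rfl⟩, ?_, ?_⟩
      · intro a ha; simp at ha; subst ha; exact hp
      · intro a ha; simp [Rule.negBody, mem_red_neg] at ha
      · have : Rule.posBody (⟨{At.q}, K15ReductBody W {BLit.k At.p}⟩ : Rule At) = ({At.p} : Set At) := by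
          ext a; simp [Rule.posBody, mem_red_pos]
        rw [this]

lemma p_mem_of_stable (W : Set (Set At)) (I : Set At)
    (h : StableModel (K15Reduct Pi2 W) I) : At.p ∈ I := by
  by_contra hpI
  have := h.1 (∅, ∅) ((glmem W I _).mpr (Or.inr (Or.inl ⟨fun _ => hpI, rfl⟩)))
  simpa [ModelsPosRule] using this

lemma no_stable_p (W : Set (Set At)) (I : Set At) (hnp : ¬ KSat W At.p) :
    ¬ StableModel (K15Reduct Pi2 W) I := by
  intro h
  have := h.1 (∅, ∅) ((glmem W I _).mpr (Or.inr (Or.inl ⟨fun hk => absurd hk hnp, rfl⟩)))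
  simpa [ModelsPosRule] using this

lemma q_mem_of_stable (W : Set (Set At)) (I : Set At) (hp : KSat W At.p)
    (h : StableModel (K15Reduct Pi2 W) I) : At.q ∈ I := by
  have hpI := p_mem_of_stable W I h
  have := h.1 ({At.q}, {At.p}) ((glmem W I _).mpr (Or.inr (Or.inr (Or.inr ⟨hp, rfl⟩))))
  have h2 := this (by simpa using hpI)
  rcases h2 with ⟨x, hx1, hx2⟩
  simp at hx1
  subst hx1
  exact hx2

lemma stable_iff (W : Set (Set At)) (I : Set At)
    (hp : KSat W At.p) (hq : KSat W At.q) :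
    StableModel (K15Reduct Pi2 W) I ↔ I = {At.p, At.q} := by
  constructor
  · intro h
    have hpI := p_mem_of_stable W I h
    have hqI := q_mem_of_stable W I hp h
    have hmodel : ModelsReduct {At.p, At.q} (GLReduct (K15Reduct Pi2 W) I) := by
      intro hb hhb
      rcases (glmem W I hb).mp hhb with rfl | ⟨hc, rfl⟩ | ⟨_, rfl⟩ | ⟨_, rfl⟩
      · intro _; exact ⟨At.p, by simp⟩
      · exact absurd hpI (hc hp)
      · intro _; exact ⟨At.p, by simp⟩
      · intro _; exact ⟨At.q, by simp⟩
    have hsub : ({At.p, At.q} : Set At) ⊆ I := by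
      intro x hx; rcases hx with rfl | hx
      · exact hpI
      · rw [Set.mem_singleton_iff] at hx; subst hx; exact hqI
    exact (h.2 _ hsub hmodel).symm
  · rintro rfl
    constructor
    · intro hb hhb
      rcases (glmem W _ hb).mp hhb with rfl | ⟨hc, rfl⟩ | ⟨_, rfl⟩ | ⟨_, rfl⟩
      · intro _; exact ⟨At.p, by simp⟩
      · exact absurd (by simp : At.p ∈ ({At.p, At.q} : Set At)) (hc hp)
      · intro _; exact ⟨At.p, by simp⟩
      · intro _; exact ⟨At.q, by simp⟩
    · intro J hJ hJm
      have h1 := hJm ({At.p, At.q}, ∅) ((glmem W _ _).mpr (Or.inl rfl))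
      have h2 := h1 (Set.empty_subset J)
      have hpq : At.p ∈ J ∨ At.q ∈ J := by
        rcases h2 with ⟨x, hx1, hx2⟩
        rcases hx1 with rfl | hx1
        · exact Or.inl hx2
        · rw [Set.mem_singleton_iff] at hx1; subst hx1; exact Or.inr hx2
      have hrp := hJm ({At.p}, {At.q}) ((glmem W _ _).mpr (Or.inr (Or.inr (Or.inl ⟨hq, rfl⟩))))
      have hrq := hJm ({At.q}, {At.p}) ((glmem W _ _).mpr (Or.inr (Or.inr (Or.inr ⟨hp, rfl⟩))))
      have hboth : At.p ∈ J ∧ At.q ∈ J := by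
        rcases hpq with hpJ | hqJ
        · refine ⟨hpJ, ?_⟩
          have := hrq (by simpa using hpJ)
          rcases this with ⟨x, hx1, hx2⟩
          simp at hx1; subst hx1; exact hx2
        · refine ⟨?_, hqJ⟩
          have := hrp (by simpa using hqJ)
          rcases this with ⟨x, hx1, hx2⟩
          simp at hx1; subst hx1; exact hx2
      apply Set.Subset.antisymm hJ
      intro x hx
      rcases hx with rfl | hx
      · exact hboth.1
      · rw [Set.mem_singleton_iff] at hx; subst hx; exact hboth.2

/-- Π₂ has exactly one K15-world view, namely {{p, q}}. -/
theorem pi2_world_views (W : Set (Set At)) :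
    K15WorldView Pi2 W ↔ W = {{At.p, At.q}} := by
  constructor
  · rintro ⟨hne, hW⟩
    have hp : KSat W At.p := by
      by_contra hnp
      obtain ⟨I, hI⟩ := hne
      have hI' : StableModel (K15Reduct Pi2 W) I := by rw [hW] at hI; exact hI
      exact no_stable_p W I hnp hI'
    have hq : KSat W At.q := by
      by_contra hnq
      obtain ⟨I, hI⟩ := hne
      have hI' : StableModel (K15Reduct Pi2 W) I := by rw [hW] at hI; exact hI
      have hpI := p_mem_of_stable W I hI'
      have hqI := q_mem_of_stable W I hp hI'
      have hmq : ModelsReduct {At.q} (GLReduct (K15Reduct Pi2 W) I) := by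
        intro hb hhb
        rcases (glmem W I hb).mp hhb with rfl | ⟨hc, rfl⟩ | ⟨hkq, rfl⟩ | ⟨_, rfl⟩
        · intro _; exact ⟨At.q, by simp⟩
        · exact absurd hpI (hc hp)
        · exact absurd hkq hnq
        · intro hsub
          exfalso
          have : At.p ∈ ({At.q} : Set At) := hsub (by simp)
          simp at this
      have : ({At.q} : Set At) = I := hI'.2 _ (by simpa using hqI) hmq
      rw [← this] at hpI
      simp at hpI
    rw [hW]
    ext I
    simp only [Set.mem_setOf_eq, Set.mem_singleton_iff]
    exact stable_iff W I hp hq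
  · rintro rfl
    have hkp : KSat {({At.p, At.q} : Set At)} At.p := by
      intro I hI; rw [Set.mem_singleton_iff] at hI; subst hI; simp
    have hkq : KSat {({At.p, At.q} : Set At)} At.q := by
      intro I hI; rw [Set.mem_singleton_iff] at hI; subst hI; simp
    refine ⟨⟨{At.p, At.q}, rfl⟩, ?_⟩
    ext I
    simp only [Set.mem_setOf_eq, Set.mem_singleton_iff]
    exact (stable_iff _ I hkp hkq).symm
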